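/- Let b ≥ 1 be an integer and s ≥ s₀ > b/2. There exist constants C(s) ≥ C(s₀) ≥ 1 such that for every matrix A on ℤᵇ with |A|_s < ∞ and every integer m ≥ 1, the m-th power Aᵐ (with matrix product (AB)_k^{k'} := Σ_j A_k^j B_j^{k'}, all sums absolutely convergent) satisfies |Aᵐ|_{s₀} ≤ C(s₀)^{m−1} |A|_{s₀}ᵐ and |Aᵐ|_s ≤ m (C(s₀)|A|_{s₀})^{m−1} C(s) |A|_s. -/

import Mathlib

open scoped ENNReal

/-- `|i| := max_k |i_k|` for a multi-index `i ∈ ℤᵇ`. -/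
def absIdx {b : ℕ} (i : Fin b → ℤ) : ℕ :=
  Finset.univ.sup fun k => (i k).natAbs

/-- `⟨i⟩ := max(1, |i|)`. -/
noncomputable def wt {b : ℕ} (i : Fin b → ℤ) : ℝ := max 1 (absIdx i : ℝ)

/-- Sobolev norm `‖u‖_s := (Σ_i ⟨i⟩^{2s} |u_i|²)^{1/2}` (valued in `ℝ≥0∞`). -/
noncomputable def sobNorm {b : ℕ} (u : (Fin b → ℤ) → ℂ) (s : ℝ) : ℝ≥0∞ :=
  (∑' i : Fin b → ℤ, ENNReal.ofReal (wt i ^ (2 * s)) * (‖u i‖₊ : ℝ≥0∞) ^ 2) ^ (1/2 : ℝ)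

/-- The `s`-decay norm of a bi-infinite matrix
`|A|_s := (Σ_h ⟨h⟩^{2s} (sup_{k-k'=h} |A_k^{k'}|)²)^{1/2}` (valued in `ℝ≥0∞`). -/
noncomputable def decayNorm {b : ℕ} (A : (Fin b → ℤ) → (Fin b → ℤ) → ℂ) (s : ℝ) : ℝ≥0∞ :=
  (∑' h : Fin b → ℤ, ENNReal.ofReal (wt h ^ (2 * s)) *
      (⨆ k : Fin b → ℤ, (‖A k (k - h)‖₊ : ℝ≥0∞)) ^ 2) ^ (1/2 : ℝ)

/-- Iterated matrix product `Aᵐ`, with `A⁰ = Id` and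
`(A^{m+1})_k^{k'} := Σ_j (Aᵐ)_k^j A_j^{k'}`. -/
noncomputable def matPow {b : ℕ} (A : (Fin b → ℤ) → (Fin b → ℤ) → ℂ) :
    ℕ → (Fin b → ℤ) → (Fin b → ℤ) → ℂ
  | 0 => fun k k' => if k = k' then 1 else 0
  | m + 1 => fun k k' => ∑' j : Fin b → ℤ, matPow A m k j * A j k'

/-!
The profile `h ↦ sup_k |A_k^{k-h}|` of a product of matrices is dominated by the convolution of
the profiles, and `|A|_s` is the weighted `ℓ²` norm `‖⟨·⟩^s u‖₂` of the profile `u` of `A`.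
Peetre's inequality `⟨h⟩^s ≤ 2^s (⟨h'⟩^s + ⟨h - h'⟩^s)` together with Young's inequality
`‖u ⋆ v‖₂ ≤ ‖u‖₂ ‖v‖₁` and the Cauchy–Schwarz bound `‖v‖₁ ≤ ‖⟨·⟩^{-s₀}‖₂ ‖⟨·⟩^{s₀} v‖₂` give the
tame estimate `|AB|_s ≤ 2^s ‖⟨·⟩^{-s₀}‖₂ (|A|_s |B|_{s₀} + |A|_{s₀} |B|_s)`; the constant is finite
because `2 s₀ > b`. Both bounds on `Aᵐ` then follow by induction on `m`.
-/

open MeasureTheory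

section L2

variable {α : Type*}

noncomputable def l2Norm (u : α → ℝ≥0∞) : ℝ≥0∞ := (∑' x, u x ^ 2) ^ (1 / 2 : ℝ)

lemma l2Norm_mono {u v : α → ℝ≥0∞} (huv : u ≤ v) : l2Norm u ≤ l2Norm v :=
  ENNReal.rpow_le_rpow (ENNReal.tsum_le_tsum fun x => pow_le_pow_left' (huv x) 2) (by norm_num)

lemma l2Norm_const_mul (c : ℝ≥0∞) (u : α → ℝ≥0∞) :
    l2Norm (fun x => c * u x) = c * l2Norm u := by
  simp only [l2Norm, mul_pow, ENNReal.tsum_mul_left]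
  rw [ENNReal.mul_rpow_of_nonneg _ _ (by norm_num), ← ENNReal.rpow_natCast, ← ENNReal.rpow_mul]
  norm_num

variable [MeasurableSpace α] [DiscreteMeasurableSpace α]

lemma l2Norm_eq_lintegral_count (u : α → ℝ≥0∞) :
    l2Norm u = (∫⁻ x, u x ^ (2 : ℝ) ∂Measure.count) ^ (1 / (2 : ℝ)) := by
  simp [l2Norm, lintegral_count]

lemma tsum_mul_le_l2Norm_mul_l2Norm (u v : α → ℝ≥0∞) :
    ∑' x, u x * v x ≤ l2Norm u * l2Norm v := by
  simpa [l2Norm_eq_lintegral_count, lintegral_count] using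
    ENNReal.lintegral_mul_le_Lp_mul_Lq Measure.count Real.HolderConjugate.two_two
      (Measurable.of_discrete (f := u)).aemeasurable (Measurable.of_discrete (f := v)).aemeasurable

lemma l2Norm_add_le (u v : α → ℝ≥0∞) : l2Norm (u + v) ≤ l2Norm u + l2Norm v := by
  simpa [l2Norm_eq_lintegral_count] using
    ENNReal.lintegral_Lp_add_le (μ := Measure.count)
      (Measurable.of_discrete (f := u)).aemeasurable (Measurable.of_discrete (f := v)).aemeasurable
      one_le_two

end L2

section Convolution

variable {G : Type*} [AddCommGroup G]

noncomputable def seqConv (u v : G → ℝ≥0∞) (h : G) : ℝ≥0∞ := ∑' h', u h' * v (h - h')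

lemma seqConv_comm (u v : G → ℝ≥0∞) : seqConv u v = seqConv v u := by
  funext h
  rw [seqConv, ← (Equiv.subLeft h).tsum_eq]
  exact tsum_congr fun h' => by simp [mul_comm]

lemma tsum_sub_right {M : Type*} [AddCommMonoid M] [TopologicalSpace M] (v : G → M) (h' : G) :
    ∑' h, v (h - h') = ∑' h, v h :=
  (Equiv.subRight h').tsum_eq v

lemma tsum_sub_left {M : Type*} [AddCommMonoid M] [TopologicalSpace M] (v : G → M) (h : G) :
    ∑' h', v (h - h') = ∑' h', v h' :=
  (Equiv.subLeft h).tsum_eq v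

lemma tsum_seqConv (u v : G → ℝ≥0∞) :
    ∑' h, seqConv u v h = (∑' h, u h) * ∑' h, v h := by
  simp only [seqConv]
  rw [ENNReal.tsum_comm, ← ENNReal.tsum_mul_right]
  exact tsum_congr fun h' => by rw [ENNReal.tsum_mul_left, tsum_sub_right]

variable [MeasurableSpace G] [DiscreteMeasurableSpace G]

lemma seqConv_sq_le (u v : G → ℝ≥0∞) (h : G) :
    seqConv u v h ^ 2 ≤ (∑' h', u h' ^ 2 * v (h - h')) * ∑' h', v h' := by
  -- Cauchy–Schwarz against the splitting `u v = (u √v) √v`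
  have cs := tsum_mul_le_l2Norm_mul_l2Norm (fun h' => u h' * v (h - h') ^ (1 / 2 : ℝ))
    (fun h' => v (h - h') ^ (1 / 2 : ℝ))
  have sqrt_sq : ∀ x : ℝ≥0∞, (x ^ (1 / 2 : ℝ)) ^ 2 = x := fun x => by
    rw [← ENNReal.rpow_natCast, ← ENNReal.rpow_mul]; norm_num
  simp only [mul_assoc, ← ENNReal.rpow_add_of_nonneg _ _ (by norm_num : (0 : ℝ) ≤ 1 / 2)
    (by norm_num : (0 : ℝ) ≤ 1 / 2), l2Norm, mul_pow, sqrt_sq] at cs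
  norm_num at cs
  calc seqConv u v h ^ 2
      ≤ ((∑' h', u h' ^ 2 * v (h - h')) ^ (1 / 2 : ℝ) * (∑' h', v (h - h')) ^ (1 / 2 : ℝ)) ^ 2 :=
        pow_le_pow_left' cs 2
    _ = (∑' h', u h' ^ 2 * v (h - h')) * ∑' h', v h' := by
        rw [mul_pow, sqrt_sq, sqrt_sq, tsum_sub_left]

lemma l2Norm_seqConv_le (u v : G → ℝ≥0∞) : l2Norm (seqConv u v) ≤ l2Norm u * ∑' h, v h := by
  have hsum : ∑' h, seqConv u v h ^ 2 ≤ (∑' h, u h ^ 2) * (∑' h, v h) ^ 2 :=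
    calc ∑' h, seqConv u v h ^ 2
        ≤ ∑' h, (∑' h', u h' ^ 2 * v (h - h')) * ∑' h, v h :=
          ENNReal.tsum_le_tsum (seqConv_sq_le u v)
      _ = (∑' h, u h ^ 2) * (∑' h, v h) ^ 2 := by
          rw [ENNReal.tsum_mul_right, sq, ← mul_assoc]
          exact congrArg (· * _) (tsum_seqConv (fun h => u h ^ 2) v)
  calc l2Norm (seqConv u v) ≤ ((∑' h, u h ^ 2) * (∑' h, v h) ^ 2) ^ (1 / 2 : ℝ) :=
        ENNReal.rpow_le_rpow hsum (by norm_num)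
    _ = l2Norm u * ∑' h, v h := by
        rw [ENNReal.mul_rpow_of_nonneg _ _ (by norm_num), ← ENNReal.rpow_natCast,
          ← ENNReal.rpow_mul]
        norm_num [l2Norm]

end Convolution

section Weights

variable {b : ℕ}

lemma absIdx_add_le (x y : Fin b → ℤ) : absIdx (x + y) ≤ absIdx x + absIdx y :=
  Finset.sup_le fun k _ => (Int.natAbs_add_le _ _).trans <|
    add_le_add (Finset.le_sup (f := fun k => (x k).natAbs) (Finset.mem_univ k))
      (Finset.le_sup (f := fun k => (y k).natAbs) (Finset.mem_univ k))

lemma one_le_wt (h : Fin b → ℤ) : 1 ≤ wt h := le_max_left _ _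

lemma wt_pos (h : Fin b → ℤ) : 0 < wt h := one_pos.trans_le (one_le_wt h)

lemma wt_add_le (x y : Fin b → ℤ) : wt (x + y) ≤ wt x + wt y := by
  have hxy : (absIdx (x + y) : ℝ) ≤ absIdx x + absIdx y := by exact_mod_cast absIdx_add_le x y
  unfold wt
  refine max_le ?_ (hxy.trans (add_le_add (le_max_right _ _) (le_max_right _ _)))
  linarith [le_max_left (1 : ℝ) (absIdx x), le_max_left (1 : ℝ) (absIdx y)]

lemma wt_add_rpow_le {s : ℝ} (hs : 0 ≤ s) (x y : Fin b → ℤ) :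
    wt (x + y) ^ s ≤ 2 ^ s * (wt x ^ s + wt y ^ s) := by
  have hmax : wt (x + y) ≤ 2 * max (wt x) (wt y) := by
    linarith [wt_add_le x y, le_max_left (wt x) (wt y), le_max_right (wt x) (wt y)]
  calc wt (x + y) ^ s ≤ (2 * max (wt x) (wt y)) ^ s :=
        Real.rpow_le_rpow (wt_pos _).le hmax hs
    _ = 2 ^ s * max (wt x) (wt y) ^ s :=
        Real.mul_rpow zero_le_two ((wt_pos x).le.trans (le_max_left _ _))
    _ ≤ 2 ^ s * (wt x ^ s + wt y ^ s) := by
        have := Real.rpow_nonneg (wt_pos x).le s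
        have := Real.rpow_nonneg (wt_pos y).le s
        gcongr
        rcases le_total (wt x) (wt y) with hxy | hxy
        · rw [max_eq_right hxy]; linarith
        · rw [max_eq_left hxy]; linarith

lemma summable_wt_rpow_neg {r : ℝ} (hr : (b : ℝ) < r) :
    Summable fun h : Fin b → ℤ => wt h ^ (-r) := by
  let L := Submodule.span ℤ (Set.range (Pi.basisFun ℝ (Fin b)))
  have hL : Module.finrank ℤ L = b := by rw [ZLattice.rank ℝ]; simp
  let e : (Fin b → ℤ) → L := fun h => ⟨fun i => h i,
    ((Pi.basisFun ℝ (Fin b)).mem_span_iff_repr_mem ℤ _).2 fun i => by simp⟩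
  have he : Function.Injective e := fun h h' hh => by
    ext i; simpa [e] using congrFun (congrArg Subtype.val hh) i
  refine Summable.of_norm_bounded_eventually
    ((ZLattice.summable_norm_rpow L (-r) (by rw [hL]; linarith)).comp_injective he) ?_
  filter_upwards [(Set.finite_singleton (0 : Fin b → ℤ)).compl_mem_cofinite] with h hh
  have he0 : e 0 = 0 := by ext; simp [e]
  have hpos : 0 < ‖e h‖ := norm_pos_iff.2 fun h0 => hh (he (h0.trans he0.symm))
  have hle : ‖e h‖ ≤ wt h := by
    refine (pi_norm_le_iff_of_nonneg (wt_pos h).le).2 fun i => ?_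
    have hi : (h i).natAbs ≤ absIdx h :=
      Finset.le_sup (f := fun k => (h k).natAbs) (Finset.mem_univ i)
    calc ‖(e h : Fin b → ℝ) i‖ = (h i).natAbs := by simp [e]
      _ ≤ absIdx h := by exact_mod_cast hi
      _ ≤ wt h := le_max_right _ _
  rw [Real.norm_of_nonneg (Real.rpow_nonneg (wt_pos h).le _)]
  exact Real.rpow_le_rpow_of_nonpos hpos hle (by linarith [show (0:ℝ) ≤ b from b.cast_nonneg])

end Weights

noncomputable def invWeightL2 (b : ℕ) (s : ℝ) : ℝ≥0∞ :=
  l2Norm fun h : Fin b → ℤ => ENNReal.ofReal (wt h ^ (-s))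

section WeightedL2

variable {b : ℕ}

noncomputable def weightedL2 (s : ℝ) (u : (Fin b → ℤ) → ℝ≥0∞) : ℝ≥0∞ :=
  l2Norm fun h => ENNReal.ofReal (wt h ^ s) * u h

lemma weightedL2_mono (s : ℝ) {u v : (Fin b → ℤ) → ℝ≥0∞} (huv : u ≤ v) :
    weightedL2 s u ≤ weightedL2 s v :=
  l2Norm_mono fun h => mul_le_mul_right (huv h) _

lemma weightedL2_le_weightedL2_of_le {s₀ s : ℝ} (hs : s₀ ≤ s) (u : (Fin b → ℤ) → ℝ≥0∞) :
    weightedL2 s₀ u ≤ weightedL2 s u :=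
  l2Norm_mono fun h => mul_le_mul_left
    (ENNReal.ofReal_le_ofReal (Real.rpow_le_rpow_of_exponent_le (one_le_wt h) hs)) _

lemma ofReal_wt_rpow_sq (s : ℝ) (h : Fin b → ℤ) :
    ENNReal.ofReal (wt h ^ s) ^ 2 = ENNReal.ofReal (wt h ^ (2 * s)) := by
  rw [← ENNReal.ofReal_pow (Real.rpow_nonneg (wt_pos h).le _), ← Real.rpow_natCast,
    ← Real.rpow_mul (wt_pos h).le, mul_comm]
  norm_num

lemma invWeightL2_ne_top {s : ℝ} (hs : (b : ℝ) / 2 < s) : invWeightL2 b s ≠ ⊤ := by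
  have hsum := summable_wt_rpow_neg (b := b) (r := 2 * s) (by linarith)
  simp only [invWeightL2, l2Norm, ofReal_wt_rpow_sq, mul_neg]
  rw [← ENNReal.ofReal_tsum_of_nonneg (fun h => Real.rpow_nonneg (wt_pos h).le _) hsum]
  exact ENNReal.rpow_ne_top_of_nonneg (by norm_num) ENNReal.ofReal_ne_top

lemma tsum_le_invWeightL2_mul_weightedL2 (s : ℝ) (u : (Fin b → ℤ) → ℝ≥0∞) :
    ∑' h, u h ≤ invWeightL2 b s * weightedL2 s u := by
  have hu : ∀ h, u h = ENNReal.ofReal (wt h ^ (-s)) * (ENNReal.ofReal (wt h ^ s) * u h) := by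
    intro h
    rw [← mul_assoc, ← ENNReal.ofReal_mul (Real.rpow_nonneg (wt_pos h).le _),
      ← Real.rpow_add (wt_pos h), neg_add_cancel, Real.rpow_zero, ENNReal.ofReal_one, one_mul]
  simpa only [← hu, invWeightL2, weightedL2] using tsum_mul_le_l2Norm_mul_l2Norm
    (fun h => ENNReal.ofReal (wt h ^ (-s))) (fun h => ENNReal.ofReal (wt h ^ s) * u h)

lemma weight_mul_seqConv_le {s : ℝ} (hs : 0 ≤ s) (u v : (Fin b → ℤ) → ℝ≥0∞) (h : Fin b → ℤ) :
    ENNReal.ofReal (wt h ^ s) * seqConv u v h ≤ ENNReal.ofReal (2 ^ s) *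
      (seqConv (fun h' => ENNReal.ofReal (wt h' ^ s) * u h') v h +
        seqConv (fun h' => ENNReal.ofReal (wt h' ^ s) * v h') u h) := by
  have peetre : ∀ h', ENNReal.ofReal (wt h ^ s) ≤
      ENNReal.ofReal (2 ^ s) * (ENNReal.ofReal (wt h' ^ s) + ENNReal.ofReal (wt (h - h') ^ s)) :=
    fun h' => by
      rw [← ENNReal.ofReal_add (Real.rpow_nonneg (wt_pos h').le _)
          (Real.rpow_nonneg (wt_pos (h - h')).le _),
        ← ENNReal.ofReal_mul (by positivity)]
      simpa using ENNReal.ofReal_le_ofReal (wt_add_rpow_le hs h' (h - h'))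
  rw [seqConv_comm _ u, seqConv, seqConv, seqConv, ← ENNReal.tsum_add, ← ENNReal.tsum_mul_left,
    ← ENNReal.tsum_mul_left]
  refine ENNReal.tsum_le_tsum fun h' => ?_
  calc ENNReal.ofReal (wt h ^ s) * (u h' * v (h - h'))
      ≤ ENNReal.ofReal (2 ^ s) * (ENNReal.ofReal (wt h' ^ s) + ENNReal.ofReal (wt (h - h') ^ s)) *
          (u h' * v (h - h')) := by gcongr; exact peetre h'
    _ = _ := by ring

lemma weightedL2_seqConv_le {s : ℝ} (hs : 0 ≤ s) (s₀ : ℝ) (u v : (Fin b → ℤ) → ℝ≥0∞) :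
    weightedL2 s (seqConv u v) ≤ ENNReal.ofReal (2 ^ s) * invWeightL2 b s₀ *
      (weightedL2 s u * weightedL2 s₀ v + weightedL2 s₀ u * weightedL2 s v) := by
  have young : ∀ w z : (Fin b → ℤ) → ℝ≥0∞,
      l2Norm (seqConv (fun h => ENNReal.ofReal (wt h ^ s) * w h) z) ≤
        weightedL2 s w * (invWeightL2 b s₀ * weightedL2 s₀ z) := fun w z =>
    (l2Norm_seqConv_le _ _).trans (mul_le_mul_right (tsum_le_invWeightL2_mul_weightedL2 s₀ z) _)
  calc weightedL2 s (seqConv u v)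
      ≤ ENNReal.ofReal (2 ^ s) * (l2Norm (seqConv (fun h => ENNReal.ofReal (wt h ^ s) * u h) v) +
          l2Norm (seqConv (fun h => ENNReal.ofReal (wt h ^ s) * v h) u)) := by
        refine (l2Norm_mono (weight_mul_seqConv_le hs u v)).trans ?_
        rw [l2Norm_const_mul]
        exact mul_le_mul_right (l2Norm_add_le _ _) _
    _ ≤ ENNReal.ofReal (2 ^ s) * (weightedL2 s u * (invWeightL2 b s₀ * weightedL2 s₀ v) +
          weightedL2 s v * (invWeightL2 b s₀ * weightedL2 s₀ u)) := by
        gcongr <;> exact young _ _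
    _ = _ := by ring

end WeightedL2

section Profile

variable {G : Type*} [AddCommGroup G]

noncomputable def profile (A : G → G → ℂ) (h : G) : ℝ≥0∞ := ⨆ k, ‖A k (k - h)‖ₑ

lemma enorm_le_profile (A : G → G → ℂ) (k k' : G) : ‖A k k'‖ₑ ≤ profile A (k - k') :=
  le_iSup_of_le k (by rw [sub_sub_cancel])

lemma tsum_enorm_mul_le_seqConv_profile (B A : G → G → ℂ) (k k' : G) :
    ∑' j, ‖B k j * A j k'‖ₑ ≤ seqConv (profile B) (profile A) (k - k') := by
  rw [seqConv, ← (Equiv.subLeft k).tsum_eq]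
  refine ENNReal.tsum_le_tsum fun h' => ?_
  rw [enorm_mul]
  gcongr
  · simpa using enorm_le_profile B k (k - h')
  · simpa [sub_sub_sub_cancel_left, sub_right_comm] using enorm_le_profile A (k - h') k'

lemma profile_mul_le (B A : G → G → ℂ) :
    profile (fun k k' => ∑' j, B k j * A j k') ≤ seqConv (profile B) (profile A) := fun h =>
  iSup_le fun k => enorm_tsum_le_tsum_enorm.trans <| by
    simpa using tsum_enorm_mul_le_seqConv_profile B A k (k - h)

end Profile

section MatPow

variable {b : ℕ}

lemma matPow_one (A : (Fin b → ℤ) → (Fin b → ℤ) → ℂ) : matPow A 1 = A := by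
  funext k k'
  simp [matPow]

lemma decayNorm_eq_weightedL2 (A : (Fin b → ℤ) → (Fin b → ℤ) → ℂ) (s : ℝ) :
    decayNorm A s = weightedL2 s (profile A) := by
  simp only [decayNorm, weightedL2, l2Norm, profile, mul_pow, ofReal_wt_rpow_sq]
  rfl

lemma tsum_profile_matPow_le (A : (Fin b → ℤ) → (Fin b → ℤ) → ℂ) (m : ℕ) :
    ∑' h, profile (matPow A m) h ≤ (∑' h, profile A h) ^ m := by
  induction m with
  | zero =>
    have hδ : profile (matPow A 0) ≤ fun h => if h = 0 then 1 else 0 := fun h =>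
      iSup_le fun k => by by_cases hh : h = 0 <;> simp [matPow, hh, eq_sub_iff_add_eq]
    simpa using ENNReal.tsum_le_tsum hδ
  | succ m ih =>
    calc ∑' h, profile (matPow A (m + 1)) h
        ≤ ∑' h, seqConv (profile (matPow A m)) (profile A) h :=
          ENNReal.tsum_le_tsum (profile_mul_le _ _)
      _ ≤ (∑' h, profile A h) ^ (m + 1) := by
          rw [tsum_seqConv, pow_succ]; gcongr

lemma summable_norm_matPow_mul {A : (Fin b → ℤ) → (Fin b → ℤ) → ℂ}
    (hA : ∑' h, profile A h ≠ ⊤) (m : ℕ) (k k' : Fin b → ℤ) :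
    Summable fun j => ‖matPow A m k j * A j k'‖ := by
  refine tsum_enorm_ne_top_iff_summable_norm.1 (ne_top_of_le_ne_top ?_
    ((tsum_enorm_mul_le_seqConv_profile _ _ k k').trans (ENNReal.le_tsum (k - k'))))
  rw [tsum_seqConv]
  exact ENNReal.mul_ne_top
    (ne_top_of_le_ne_top (ENNReal.pow_ne_top hA) (tsum_profile_matPow_le A m)) hA

lemma decayNorm_mul_le {s : ℝ} (hs : 0 ≤ s) (s₀ : ℝ) (B A : (Fin b → ℤ) → (Fin b → ℤ) → ℂ) :
    decayNorm (fun k k' => ∑' j, B k j * A j k') s ≤ ENNReal.ofReal (2 ^ s) * invWeightL2 b s₀ *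
      (decayNorm B s * decayNorm A s₀ + decayNorm B s₀ * decayNorm A s) := by
  simp only [decayNorm_eq_weightedL2]
  exact (weightedL2_mono s (profile_mul_le _ _)).trans (weightedL2_seqConv_le hs s₀ _ _)

end MatPow

section Recursion

variable {x y : ℕ → ℝ≥0∞} {K D₀ D : ℝ≥0∞}

lemma le_pow_mul_pow_of_succ_le (hx₁ : x 1 ≤ D₀) (hx : ∀ m, x (m + 1) ≤ K * (x m * D₀)) (n : ℕ) :
    x (n + 1) ≤ K ^ n * D₀ ^ (n + 1) := by
  induction n with
  | zero => simpa using hx₁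
  | succ n ih =>
    calc x (n + 2) ≤ K * (K ^ n * D₀ ^ (n + 1) * D₀) := (hx (n + 1)).trans (by gcongr)
      _ = K ^ (n + 1) * D₀ ^ (n + 2) := by ring

lemma le_mul_pow_of_succ_le (hK : 1 ≤ K) (hx : ∀ n, x (n + 1) ≤ K ^ n * D₀ ^ (n + 1))
    (hy₁ : y 1 ≤ D) (hy : ∀ m, y (m + 1) ≤ K * (y m * D₀ + x m * D)) (n : ℕ) :
    y (n + 1) ≤ (n + 1) * (K * D₀) ^ n * K * D := by
  induction n with
  | zero => simpa using hy₁.trans (le_mul_of_one_le_left' hK)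
  | succ n ih =>
    calc y (n + 2)
        ≤ K * ((n + 1) * (K * D₀) ^ n * K * D * D₀ + K ^ n * D₀ ^ (n + 1) * D) :=
          (hy (n + 1)).trans (by gcongr; exact hx n)
      _ = (n + 1) * (K * D₀) ^ (n + 1) * K * D + (K * D₀) ^ (n + 1) * D := by ring
      _ ≤ (n + 1) * (K * D₀) ^ (n + 1) * K * D + (K * D₀) ^ (n + 1) * K * D := by
          gcongr; exact le_mul_of_one_le_right' hK
      _ = (↑(n + 1) + 1) * (K * D₀) ^ (n + 1) * K * D := by push_cast; ring

end Recursion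

lemma decayNorm_matPow_succ_le {b : ℕ} {s₀ s : ℝ} (hs₀ : 0 ≤ s₀) (hs : s₀ ≤ s) {K : ℝ≥0∞}
    (hK₁ : 1 ≤ K) (hK : 2 * (ENNReal.ofReal (2 ^ s) * invWeightL2 b s₀) ≤ K)
    (A : (Fin b → ℤ) → (Fin b → ℤ) → ℂ) (n : ℕ) :
    decayNorm (matPow A (n + 1)) s₀ ≤ K ^ n * decayNorm A s₀ ^ (n + 1) ∧
      decayNorm (matPow A (n + 1)) s ≤ (n + 1) * (K * decayNorm A s₀) ^ n * K * decayNorm A s := by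
  set S := invWeightL2 b s₀
  have hx := le_pow_mul_pow_of_succ_le (x := fun m => decayNorm (matPow A m) s₀) (K := K)
    (by simp [matPow_one]) fun m =>
      calc decayNorm (matPow A (m + 1)) s₀
          ≤ ENNReal.ofReal (2 ^ s₀) * S * (decayNorm (matPow A m) s₀ * decayNorm A s₀ +
              decayNorm (matPow A m) s₀ * decayNorm A s₀) := decayNorm_mul_le hs₀ s₀ _ _
        _ = 2 * (ENNReal.ofReal (2 ^ s₀) * S) * (decayNorm (matPow A m) s₀ * decayNorm A s₀) := by
          ring
        _ ≤ K * (decayNorm (matPow A m) s₀ * decayNorm A s₀) := by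
          refine mul_le_mul_left (le_trans ?_ hK) _
          gcongr 2 * (ENNReal.ofReal ?_ * S)
          exact Real.rpow_le_rpow_of_exponent_le one_le_two hs
  have hy := le_mul_pow_of_succ_le (y := fun m => decayNorm (matPow A m) s) hK₁ hx
    (by simp [matPow_one]) fun m =>
      calc decayNorm (matPow A (m + 1)) s
          ≤ ENNReal.ofReal (2 ^ s) * S * (decayNorm (matPow A m) s * decayNorm A s₀ +
              decayNorm (matPow A m) s₀ * decayNorm A s) := decayNorm_mul_le (hs₀.trans hs) s₀ _ _
        _ ≤ K * (decayNorm (matPow A m) s * decayNorm A s₀ +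
              decayNorm (matPow A m) s₀ * decayNorm A s) :=
          mul_le_mul_left ((le_mul_of_one_le_left' one_le_two).trans hK) _
  exact ⟨hx n, hy n⟩

theorem stmt6_general (b : ℕ) (s₀ s : ℝ) (hs₀ : (b : ℝ) / 2 < s₀) (hs : s₀ ≤ s) :
    ∃ C₀ C : ℝ, 1 ≤ C₀ ∧ C₀ ≤ C ∧
      ∀ A : (Fin b → ℤ) → (Fin b → ℤ) → ℂ, decayNorm A s < ⊤ →
        (∀ (m : ℕ) (k k' : Fin b → ℤ), Summable fun j : Fin b → ℤ => ‖matPow A m k j * A j k'‖) ∧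
        ∀ m : ℕ, 1 ≤ m →
          decayNorm (matPow A m) s₀ ≤ ENNReal.ofReal C₀ ^ (m - 1) * decayNorm A s₀ ^ m ∧
          decayNorm (matPow A m) s ≤
            (m : ℝ≥0∞) * (ENNReal.ofReal C₀ * decayNorm A s₀) ^ (m - 1) *
              ENNReal.ofReal C * decayNorm A s := by
  have hS : invWeightL2 b s₀ ≠ ⊤ := invWeightL2_ne_top hs₀
  set C := max 1 (2 * 2 ^ s * (invWeightL2 b s₀).toReal)
  have hK : 2 * (ENNReal.ofReal (2 ^ s) * invWeightL2 b s₀) ≤ ENNReal.ofReal C := by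
    rw [← ENNReal.ofReal_toReal hS, ← ENNReal.ofReal_mul (by positivity), ← ENNReal.ofReal_ofNat 2,
      ← ENNReal.ofReal_mul zero_le_two, ← mul_assoc]
    exact ENNReal.ofReal_le_ofReal (le_max_right _ _)
  refine ⟨C, C, le_max_left _ _, le_rfl, fun A hA => ⟨summable_norm_matPow_mul ?_, fun m hm => ?_⟩⟩
  · have hD₀ : weightedL2 s₀ (profile A) ≠ ⊤ := by
      refine ne_top_of_le_ne_top hA.ne ?_
      simpa only [decayNorm_eq_weightedL2] using weightedL2_le_weightedL2_of_le hs _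
    exact ne_top_of_le_ne_top (ENNReal.mul_ne_top hS hD₀) (tsum_le_invWeightL2_mul_weightedL2 s₀ _)
  · obtain ⟨n, rfl⟩ := Nat.exists_eq_add_of_le' hm
    simpa only [add_tsub_cancel_right, Nat.cast_add, Nat.cast_one] using
      decayNorm_matPow_succ_le (by linarith [b.cast_nonneg (α := ℝ)]) hs
        (ENNReal.one_le_ofReal.2 (le_max_left _ _)) hK A n

theorem stmt6 (b : ℕ) (hb : 1 ≤ b) (s₀ s : ℝ) (hs₀ : (b : ℝ) / 2 < s₀) (hs : s₀ ≤ s) :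
    ∃ C₀ C : ℝ, 1 ≤ C₀ ∧ C₀ ≤ C ∧
      ∀ A : (Fin b → ℤ) → (Fin b → ℤ) → ℂ, decayNorm A s < ⊤ →
        (∀ (m : ℕ) (k k' : Fin b → ℤ), Summable fun j : Fin b → ℤ => ‖matPow A m k j * A j k'‖) ∧
        ∀ m : ℕ, 1 ≤ m →
          decayNorm (matPow A m) s₀ ≤ ENNReal.ofReal C₀ ^ (m - 1) * decayNorm A s₀ ^ m ∧
          decayNorm (matPow A m) s ≤
            (m : ℝ≥0∞) * (ENNReal.ofReal C₀ * decayNorm A s₀) ^ (m - 1) *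
              ENNReal.ofReal C * decayNorm A s :=
  stmt6_general b s₀ s hs₀ hs
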